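/- For n > 0, the partition function Z(n) = ∫_{ℝ²} exp(-n·w1^2·w2^4)·(1/(2π))·exp(-(w1^2+w2^2)/2) dw1 dw2 satisfies n^{1/4}·Z(n) → (2^{-7/4}/π)·Γ(1/4)^2 as n → ∞. -/
import Mathlib


open Real MeasureTheory Filter

open Set

lemma sqrt_bound (u : ℝ) : Real.sqrt (π / (u^4 + 1/2)) ≤ Real.sqrt π * (2 / (1 + u^2)) := by
  have h1 : (0:ℝ) < u^4 + 1/2 := by positivity
  have h2 : (1 + u^2)/2 ≤ Real.sqrt (u^4 + 1/2) := by
    rw [show (1 + u^2)/2 = Real.sqrt (((1+u^2)/2)^2) by rw [Real.sqrt_sq (by positivity)]]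
    apply Real.sqrt_le_sqrt
    nlinarith [sq_nonneg (u^2 - 1)]
  rw [Real.sqrt_div pi_pos.le]
  calc Real.sqrt π / Real.sqrt (u^4+1/2) ≤ Real.sqrt π / ((1 + u^2)/2) := by
        gcongr
    _ = Real.sqrt π * (2 / (1 + u^2)) := by field_simp

lemma cont_sqrtpi : Continuous (fun u : ℝ => Real.sqrt (π / (u^4 + 1/2))) := by
  apply Real.continuous_sqrt.comp
  exact continuous_const.div (by continuity) (fun u => by positivity)

lemma integrable_sqrtpi : Integrable (fun u : ℝ => Real.sqrt (π / (u^4 + 1/2))) := by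
  apply Integrable.mono' ((integrable_inv_one_add_sq.const_mul 2).const_mul (Real.sqrt π))
  · exact cont_sqrtpi.aestronglyMeasurable
  · filter_upwards with u
    rw [Real.norm_eq_abs, abs_of_nonneg (Real.sqrt_nonneg _)]
    calc Real.sqrt (π / (u^4 + 1/2)) ≤ Real.sqrt π * (2/(1+u^2)) := sqrt_bound u
      _ = Real.sqrt π * (2 * (1+u^2)⁻¹) := by ring

lemma K_integrable : Integrable (Function.uncurry fun (u v : ℝ) =>
    Real.exp (-(u^4 + 1/2) * v^2)) ((volume : Measure ℝ).prod volume) := by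
  have hm : AEStronglyMeasurable (Function.uncurry fun (u v : ℝ) =>
      Real.exp (-(u^4 + 1/2) * v^2)) ((volume : Measure ℝ).prod volume) := by
    apply Continuous.aestronglyMeasurable
    apply Real.continuous_exp.comp
    exact (((continuous_fst.pow 4).add continuous_const).neg).mul (continuous_snd.pow 2)
  rw [MeasureTheory.integrable_prod_iff hm]
  refine ⟨Filter.Eventually.of_forall fun u => integrable_exp_neg_mul_sq (b := u^4+1/2) (by positivity), ?_⟩
  apply integrable_sqrtpi.congr
  filter_upwards with u
  rw [show (∫ v : ℝ, ‖Function.uncurry (fun (u v : ℝ) =>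
      Real.exp (-(u^4 + 1/2) * v^2)) (u, v)‖) = ∫ v : ℝ, Real.exp (-(u^4 + 1/2) * v^2) by
    simp [Function.uncurry, Real.norm_eq_abs, abs_of_nonneg (Real.exp_nonneg _)]]
  exact (integral_gaussian _).symm

lemma ae_ne_zero : ∀ᵐ v : ℝ, v ≠ 0 := by
  rw [ae_iff]
  simpa [Set.setOf_eq_eq_singleton] using measure_singleton (0:ℝ)

lemma inner_u_integral {v : ℝ} (hv : v ≠ 0) :
    (∫ u : ℝ, Real.exp (-(u^4 + 1/2) * v^2))
      = (2 * Real.Gamma (1/4 + 1)) * (|v| ^ (-(1/2) : ℝ) * Real.exp (-(v^2/2))) := by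
  have hv2 : (0:ℝ) < v^2 := by positivity
  calc (∫ u : ℝ, Real.exp (-(u^4 + 1/2) * v^2))
      = ∫ u : ℝ, Real.exp (-v^2 * u^4) * Real.exp (-(v^2/2)) := by
        congr 1; funext u; rw [← Real.exp_add]; ring_nf
    _ = (∫ u : ℝ, Real.exp (-v^2 * u^4)) * Real.exp (-(v^2/2)) := integral_mul_const _ _
    _ = (2 * ∫ x in Ioi (0:ℝ), Real.exp (-v^2 * x^4)) * Real.exp (-(v^2/2)) := by
        rw [← integral_comp_abs (f := fun x => Real.exp (-v^2 * x^4))]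
        congr 1
        refine integral_congr_ae (Filter.Eventually.of_forall fun u => ?_)
        simp only []
        rw [pow_abs, abs_of_nonneg (by positivity : (0:ℝ) ≤ u^4)]
    _ = (2 * ((v^2) ^ (-1/(4:ℝ)) * Real.Gamma (1/(4:ℝ) + 1))) * Real.exp (-(v^2/2)) := by
        rw [show (∫ x in Ioi (0:ℝ), Real.exp (-v^2 * x^4))
            = ∫ x in Ioi (0:ℝ), Real.exp (-v^2 * x ^ (4:ℝ)) from
          setIntegral_congr_fun measurableSet_Ioi fun x _ => by
            rw [show (4:ℝ) = ((4:ℕ):ℝ) by norm_num, Real.rpow_natCast]]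
        rw [integral_exp_neg_mul_rpow (by norm_num) hv2]
    _ = (2 * Real.Gamma (1/4 + 1)) * (|v| ^ (-(1/2) : ℝ) * Real.exp (-(v^2/2))) := by
        rw [show (v^2) ^ (-1/(4:ℝ)) = |v| ^ (-(1/2) : ℝ) by
          rw [← sq_abs, ← Real.rpow_natCast |v| 2, ← Real.rpow_mul (abs_nonneg v)]
          norm_num]
        ring_nf

lemma outer_v_integral :
    (∫ v : ℝ, |v| ^ (-(1/2) : ℝ) * Real.exp (-(v^2/2)))
      = 2 * ((1/2 : ℝ) ^ (-(1/4) : ℝ) * (1/2) * Real.Gamma (1/4)) := by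
  calc (∫ v : ℝ, |v| ^ (-(1/2) : ℝ) * Real.exp (-(v^2/2)))
      = ∫ v : ℝ, (fun x => x ^ (-(1/2) : ℝ) * Real.exp (-(x^2/2))) |v| :=
        integral_congr_ae (Filter.Eventually.of_forall fun v => by simp only []; rw [sq_abs])
    _ = 2 * ∫ x in Ioi (0:ℝ), x ^ (-(1/2) : ℝ) * Real.exp (-(x^2/2)) :=
        integral_comp_abs (f := fun x => x ^ (-(1/2) : ℝ) * Real.exp (-(x^2/2)))
    _ = 2 * ∫ x in Ioi (0:ℝ), x ^ (-(1/2) : ℝ) * Real.exp (-(1/2) * x ^ (2:ℝ)) := by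
        congr 1
        refine setIntegral_congr_fun measurableSet_Ioi fun x _ => ?_
        rw [show x ^ (2:ℝ) = x ^ (2:ℕ) by
          rw [show (2:ℝ) = ((2:ℕ):ℝ) by norm_num, Real.rpow_natCast]]
        ring_nf
    _ = 2 * ((1/2 : ℝ) ^ (-(1/4) : ℝ) * (1/2) * Real.Gamma (1/4)) := by
        rw [show (∫ x in Ioi (0:ℝ), x ^ (-(1/2) : ℝ) * Real.exp (-(1/2) * x ^ (2:ℝ)))
            = (1/2 : ℝ) ^ (-(-(1/2)+1)/(2:ℝ)) * (1/(2:ℝ)) * Real.Gamma ((-(1/2)+1)/2) from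
          integral_rpow_mul_exp_neg_mul_rpow (by norm_num) (by norm_num) (by norm_num)]
        norm_num
lemma J_val : (∫ u : ℝ, Real.sqrt (π / (u^4 + 1/2)))
    = 2 ^ (-(3/4) : ℝ) * Real.Gamma (1/4) ^ 2 := by
  calc (∫ u : ℝ, Real.sqrt (π / (u^4 + 1/2)))
      = ∫ u : ℝ, ∫ v : ℝ, Real.exp (-(u^4 + 1/2) * v^2) :=
        integral_congr_ae (Filter.Eventually.of_forall fun u =>
          (integral_gaussian (u^4 + 1/2)).symm)
    _ = ∫ v : ℝ, ∫ u : ℝ, Real.exp (-(u^4 + 1/2) * v^2) :=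
        integral_integral_swap K_integrable
    _ = ∫ v : ℝ, (2 * Real.Gamma (1/4 + 1)) * (|v| ^ (-(1/2) : ℝ) * Real.exp (-(v^2/2))) := by
        refine integral_congr_ae ?_
        filter_upwards [ae_ne_zero] with v hv
        exact inner_u_integral hv
    _ = (2 * Real.Gamma (1/4 + 1)) *
          ∫ v : ℝ, |v| ^ (-(1/2) : ℝ) * Real.exp (-(v^2/2)) := integral_const_mul _ _
    _ = (2 * Real.Gamma (1/4 + 1)) * (2 * ((1/2 : ℝ) ^ (-(1/4) : ℝ) * (1/2) * Real.Gamma (1/4))) := by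
        rw [outer_v_integral]
    _ = 2 ^ (-(3/4) : ℝ) * Real.Gamma (1/4) ^ 2 := by
        rw [Real.Gamma_add_one (by norm_num),
          show ((1/2:ℝ)) ^ (-(1/4):ℝ) = 2 ^ ((1/4):ℝ) by
            rw [show (1/2:ℝ) = 2⁻¹ by norm_num, Real.inv_rpow (by norm_num),
              ← Real.rpow_neg (by norm_num)]
            norm_num,
          show (-(3/4) : ℝ) = 1/4 - 1 by norm_num,
          Real.rpow_sub (by norm_num), Real.rpow_one]
        ring

/-- Partition function for `f(w1,w2) = w1^2 w2^4`. -/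
noncomputable def Zb (n : ℝ) : ℝ :=
  ∫ w1 : ℝ, ∫ w2 : ℝ,
    Real.exp (-(n * (w1 ^ 2 * w2 ^ 4))) *
      (1 / (2 * π) * Real.exp (-(w1 ^ 2 + w2 ^ 2) / 2))

lemma Zb_integrand_integrable {n : ℝ} (hn : 0 < n) :
    Integrable (Function.uncurry fun (w1 w2 : ℝ) =>
      Real.exp (-(n * (w1 ^ 2 * w2 ^ 4))) *
        (1 / (2 * π) * Real.exp (-(w1 ^ 2 + w2 ^ 2) / 2)))
      ((volume : Measure ℝ).prod volume) := by
  have hg : Integrable (fun p : ℝ × ℝ =>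
      (1 / (2 * π)) * (Real.exp (-(1/2) * p.1 ^ 2) * Real.exp (-(1/2) * p.2 ^ 2)))
      ((volume : Measure ℝ).prod volume) :=
    ((integrable_exp_neg_mul_sq (by norm_num)).mul_prod
      (integrable_exp_neg_mul_sq (by norm_num))).const_mul _
  refine Integrable.mono' hg ?_ ?_
  · apply Continuous.aestronglyMeasurable
    apply Continuous.mul
    · apply Real.continuous_exp.comp
      exact (continuous_const.mul ((continuous_fst.pow 2).mul (continuous_snd.pow 4))).neg
    · apply continuous_const.mul
      apply Real.continuous_exp.comp
      exact (((continuous_fst.pow 2).add (continuous_snd.pow 2)).neg).div_const 2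
  · filter_upwards with p
    simp only [Function.uncurry]
    rw [Real.norm_eq_abs, abs_of_nonneg (by positivity)]
    calc Real.exp (-(n * (p.1 ^ 2 * p.2 ^ 4))) *
          (1 / (2 * π) * Real.exp (-(p.1 ^ 2 + p.2 ^ 2) / 2))
        ≤ 1 * (1 / (2 * π) * Real.exp (-(p.1 ^ 2 + p.2 ^ 2) / 2)) :=
          mul_le_mul_of_nonneg_right
            (Real.exp_le_one_iff.mpr (neg_nonpos.mpr (by positivity))) (by positivity)
      _ = (1 / (2 * π)) * (Real.exp (-(1/2) * p.1 ^ 2) * Real.exp (-(1/2) * p.2 ^ 2)) := by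
          rw [one_mul, ← Real.exp_add]
          congr 1
          ring

lemma Zb_eq {n : ℝ} (hn : 0 < n) :
    Zb n = ∫ w2 : ℝ, 1 / (2 * π) * Real.exp (-w2^2/2) *
      Real.sqrt (π / (n * w2^4 + 1/2)) := by
  rw [Zb, integral_integral_swap (Zb_integrand_integrable hn)]
  refine integral_congr_ae (Filter.Eventually.of_forall fun w2 => ?_)
  have hb : (0:ℝ) < n * w2^4 + 1/2 := by positivity
  calc (∫ w1 : ℝ, Real.exp (-(n * (w1 ^ 2 * w2 ^ 4))) *
          (1 / (2 * π) * Real.exp (-(w1 ^ 2 + w2 ^ 2) / 2)))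
      = ∫ w1 : ℝ, (1 / (2 * π) * Real.exp (-w2^2/2)) *
          Real.exp (-(n * w2^4 + 1/2) * w1^2) := by
        refine integral_congr_ae (Filter.Eventually.of_forall fun w1 => ?_)
        simp only []
        rw [mul_left_comm, ← Real.exp_add, mul_assoc, ← Real.exp_add]
        congr 2
        ring
    _ = (1 / (2 * π) * Real.exp (-w2^2/2)) * Real.sqrt (π / (n * w2^4 + 1/2)) := by
        rw [integral_const_mul, integral_gaussian]

lemma scaled {n : ℝ} (hn : 0 < n) :
    n ^ (1/4 : ℝ) * Zb n = ∫ u : ℝ, 1 / (2 * π) *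
      Real.exp (-(n ^ (-(1/2) : ℝ) * u^2)/2) * Real.sqrt (π / (u^4 + 1/2)) := by
  rw [Zb_eq hn]
  have key := MeasureTheory.Measure.integral_comp_mul_left
    (fun w2 => 1 / (2 * π) * Real.exp (-w2^2/2) * Real.sqrt (π / (n * w2^4 + 1/2)))
    (n ^ (-(1/4) : ℝ))
  have habs : |((n:ℝ) ^ (-(1/4) : ℝ))⁻¹| = n ^ ((1/4) : ℝ) := by
    rw [Real.rpow_neg hn.le, inv_inv, abs_of_pos (Real.rpow_pos_of_pos hn _)]
  rw [habs, smul_eq_mul] at key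
  rw [← key]
  refine integral_congr_ae (Filter.Eventually.of_forall fun u => ?_)
  simp only []
  have hpow2 : ((n:ℝ) ^ (-(1/4) : ℝ))^2 = n ^ (-(1/2) : ℝ) := by
    rw [← Real.rpow_natCast (n ^ (-(1/4) : ℝ)) 2, ← Real.rpow_mul hn.le]
    norm_num
  have hpow4 : ((n:ℝ) ^ (-(1/4) : ℝ))^4 = n⁻¹ := by
    rw [← Real.rpow_natCast (n ^ (-(1/4) : ℝ)) 4, ← Real.rpow_mul hn.le]
    norm_num [Real.rpow_neg_one]
  rw [mul_pow, mul_pow, hpow2, hpow4, ← mul_assoc, mul_inv_cancel₀ hn.ne', one_mul]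

/-- `n^(1/4)·Z(n) → (2^(-7/4)/π)·Γ(1/4)^2` as `n → ∞`. -/
theorem Zb_asymptotic :
    Tendsto (fun n : ℝ => n ^ (1/4 : ℝ) * Zb n) atTop
      (nhds ((2 : ℝ) ^ (-(7/4) : ℝ) / π * (Real.Gamma (1/4)) ^ 2)) := by
  have hlimit : Tendsto (fun n : ℝ => ∫ u : ℝ, 1 / (2 * π) *
      Real.exp (-(n ^ (-(1/2) : ℝ) * u^2)/2) * Real.sqrt (π / (u^4 + 1/2))) atTop
      (nhds (∫ u : ℝ, 1 / (2 * π) * Real.sqrt (π / (u^4 + 1/2)))) := by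
    refine tendsto_integral_filter_of_dominated_convergence
      (fun u => 1 / (2 * π) * Real.sqrt (π / (u^4 + 1/2))) ?_ ?_ ?_ ?_
    · refine Filter.Eventually.of_forall fun n => ?_
      exact ((continuous_const.mul (Real.continuous_exp.comp
        (((continuous_const.mul (continuous_pow 2)).neg).div_const 2))).mul
        cont_sqrtpi).aestronglyMeasurable
    · filter_upwards [eventually_ge_atTop (0:ℝ)] with n hn
      filter_upwards with u
      have hx : 0 ≤ n ^ (-(1/2) : ℝ) * u^2 := mul_nonneg (Real.rpow_nonneg hn _) (sq_nonneg u)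
      rw [Real.norm_eq_abs, abs_of_nonneg (by positivity)]
      calc 1 / (2 * π) * Real.exp (-(n ^ (-(1/2) : ℝ) * u^2)/2) * Real.sqrt (π / (u^4 + 1/2))
          ≤ 1 / (2 * π) * 1 * Real.sqrt (π / (u^4 + 1/2)) := by
            gcongr
            exact Real.exp_le_one_iff.mpr (by linarith)
        _ = 1 / (2 * π) * Real.sqrt (π / (u^4 + 1/2)) := by rw [mul_one]
    · exact integrable_sqrtpi.const_mul _
    · refine Filter.Eventually.of_forall fun u => ?_
      have h1 : Tendsto (fun n : ℝ => n ^ (-(1/2) : ℝ)) atTop (nhds 0) :=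
        tendsto_rpow_neg_atTop (by norm_num)
      have h2 := (Real.continuous_exp.tendsto _).comp (((h1.mul_const (u^2)).neg).div_const 2)
      have h3 := (tendsto_const_nhds (x := 1 / (2 * π)) (f := atTop)).mul h2
      have h4 := h3.mul (tendsto_const_nhds (x := Real.sqrt (π / (u^4 + 1/2))))
      simpa using h4
  have hval : (∫ u : ℝ, 1 / (2 * π) * Real.sqrt (π / (u^4 + 1/2)))
      = (2 : ℝ) ^ (-(7/4) : ℝ) / π * (Real.Gamma (1/4)) ^ 2 := by
    rw [integral_const_mul, J_val, show (-(7/4) : ℝ) = -(3/4) + -1 by norm_num,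
      Real.rpow_add (by norm_num), Real.rpow_neg_one]
    field_simp
  rw [hval] at hlimit
  refine Tendsto.congr' ?_ hlimit
  filter_upwards [eventually_gt_atTop (0:ℝ)] with n hn
  exact (scaled hn).symm
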